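/- Let r > 0 be a finite constant, let J be a countably infinite index set and let (Y_j)_{j∈J} be i.i.d. nonnegative real-valued random variables with E[(log⁺ Y_j)^r] = ∞. Let (L_i)_{i∈ℕ} be a sequence of pairwise disjoint finite subsets of J such that |L_i| ≥ c₂ β^{c₃ i} for each i ∈ ℕ, where c₂ > 0, c₃ > 0 and β > 1 are constants. Define M_i := max_{j∈L_i} Y_j. Then for every finite constant c > 0, P(M_i ≥ exp(c β^{c₃ i / r}) for infinitely many i ∈ ℕ) = 1. -/

import Mathlib

/-!
With `Z := (log⁺ Y)^r` and thresholds `tᵢ := exp (c β^{c₃ i / r})`, the event `Y ≥ tᵢ` is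
`Z ≥ c^r ρ^i` for `ρ := β^{c₃} > 1`. Since the levels `c^r ρ^i` grow geometrically,
`E Z = ∞` forces `∑ᵢ ρ^i P(Z ≥ c^r ρ^i) = ∞`, and as `|Lᵢ| ≳ ρ^i` the events
`{Y_j ≥ tᵢ}`, `j ∈ Lᵢ`, have divergent total probability. They involve distinct, hence
independent, variables, so by the second Borel–Cantelli lemma infinitely many of them occur;
each block `Lᵢ` being finite, this happens for infinitely many `i`, and `Mᵢ ≥ Y_j` on `Lᵢ`.
-/

open MeasureTheory Filter ProbabilityTheory Function
open scoped ENNReal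

theorem ENNReal.ofReal_le_add_mul_tsum_indicator_geom {a ρ : ℝ} (ha : 0 < a) (hρ : 1 < ρ)
    (x : ℝ) :
    ENNReal.ofReal x ≤ ENNReal.ofReal a + ENNReal.ofReal ρ *
      ∑' n : ℕ, {y | a * ρ ^ n ≤ y}.indicator (fun _ => ENNReal.ofReal (a * ρ ^ n)) x := by
  rcases lt_or_ge x a with hxa | hax
  · exact (ENNReal.ofReal_le_ofReal hxa.le).trans le_self_add
  obtain ⟨n, hn, hn'⟩ := exists_nat_pow_near ((one_le_div ha).2 hax) hρ
  have hlow : a * ρ ^ n ≤ x := by rwa [le_div_iff₀' ha] at hn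
  have hup : x ≤ ρ * (a * ρ ^ n) := by
    rw [div_lt_iff₀ ha, pow_succ] at hn'
    linarith
  calc ENNReal.ofReal x ≤ ENNReal.ofReal ρ * ENNReal.ofReal (a * ρ ^ n) := by
        rw [← ENNReal.ofReal_mul (by linarith)]
        exact ENNReal.ofReal_le_ofReal hup
    _ ≤ ENNReal.ofReal ρ *
        ∑' n : ℕ, {y | a * ρ ^ n ≤ y}.indicator (fun _ => ENNReal.ofReal (a * ρ ^ n)) x := by
        gcongr
        refine le_of_eq_of_le ?_ (ENNReal.le_tsum n)
        exact (Set.indicator_of_mem (show x ∈ {y | a * ρ ^ n ≤ y} from hlow)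
          fun _ => ENNReal.ofReal (a * ρ ^ n)).symm
    _ ≤ _ := le_add_self

theorem MeasureTheory.tsum_ofReal_mul_measure_le_eq_top_of_lintegral_eq_top {Ω : Type*}
    [MeasurableSpace Ω] {μ : Measure Ω} [IsFiniteMeasure μ] {Z : Ω → ℝ} (hZ : Measurable Z)
    (hint : ∫⁻ ω, ENNReal.ofReal (Z ω) ∂μ = ∞) {a ρ : ℝ} (ha : 0 < a) (hρ : 1 < ρ) :
    ∑' n : ℕ, ENNReal.ofReal (a * ρ ^ n) * μ {ω | a * ρ ^ n ≤ Z ω} = ∞ := by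
  have hm : ∀ n : ℕ, MeasurableSet {ω | a * ρ ^ n ≤ Z ω} :=
    fun n => measurableSet_le measurable_const hZ
  have htop_le : ∞ ≤ ENNReal.ofReal a * μ Set.univ + ENNReal.ofReal ρ *
      ∑' n : ℕ, ENNReal.ofReal (a * ρ ^ n) * μ {ω | a * ρ ^ n ≤ Z ω} :=
    calc ∞ = ∫⁻ ω, ENNReal.ofReal (Z ω) ∂μ := hint.symm
      _ ≤ ∫⁻ ω, ENNReal.ofReal a + ENNReal.ofReal ρ * ∑' n : ℕ,
            {ω | a * ρ ^ n ≤ Z ω}.indicator (fun _ => ENNReal.ofReal (a * ρ ^ n)) ω ∂μ :=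
        lintegral_mono fun ω => ENNReal.ofReal_le_add_mul_tsum_indicator_geom ha hρ (Z ω)
      _ = _ := by
        rw [lintegral_add_left measurable_const, lintegral_const,
          lintegral_const_mul _ (Measurable.tsum fun n => measurable_const.indicator (hm n)),
          lintegral_tsum fun n => (measurable_const.indicator (hm n)).aemeasurable]
        simp_rw [lintegral_indicator_const (hm _)]
  by_contra h
  exact (ENNReal.add_ne_top.2 ⟨ENNReal.mul_ne_top ENNReal.ofReal_ne_top (measure_ne_top μ _),
    ENNReal.mul_ne_top ENNReal.ofReal_ne_top h⟩) (top_le_iff.1 htop_le)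

theorem MeasureTheory.tsum_natCast_mul_measure_le_eq_top_of_lintegral_eq_top {Ω : Type*}
    [MeasurableSpace Ω] {μ : Measure Ω} [IsFiniteMeasure μ] {Z : Ω → ℝ} (hZ : Measurable Z)
    (hint : ∫⁻ ω, ENNReal.ofReal (Z ω) ∂μ = ∞) {N : ℕ → ℕ} {a ρ κ : ℝ} (ha : 0 < a)
    (hρ : 1 < ρ) (hκ : 0 < κ) (hN : ∀ i, 1 ≤ i → κ * ρ ^ i ≤ N i) :
    ∑' i, (N i : ℝ≥0∞) * μ {ω | a * ρ ^ i ≤ Z ω} = ∞ := by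
  have hdiv := tsum_ofReal_mul_measure_le_eq_top_of_lintegral_eq_top hZ hint
    (mul_pos ha (zero_lt_one.trans hρ)) hρ
  simp_rw [mul_assoc, ← pow_succ'] at hdiv
  refine top_le_iff.1 <| calc
    ∞ = ENNReal.ofReal (κ / a) *
        ∑' n : ℕ, ENNReal.ofReal (a * ρ ^ (n + 1)) * μ {ω | a * ρ ^ (n + 1) ≤ Z ω} := by
      rw [hdiv, ENNReal.mul_top (ENNReal.ofReal_pos.2 (div_pos hκ ha)).ne']
    _ ≤ ∑' n : ℕ, (N (n + 1) : ℝ≥0∞) * μ {ω | a * ρ ^ (n + 1) ≤ Z ω} := by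
      rw [← ENNReal.tsum_mul_left]
      refine ENNReal.tsum_le_tsum fun n => ?_
      rw [← mul_assoc, ← ENNReal.ofReal_mul (div_pos hκ ha).le, ← ENNReal.ofReal_natCast]
      gcongr
      calc κ / a * (a * ρ ^ (n + 1)) = κ * ρ ^ (n + 1) := by field_simp
        _ ≤ N (n + 1) := hN (n + 1) n.succ_pos
    _ ≤ _ := ENNReal.tsum_comp_le_tsum_of_injective Nat.succ_injective
      fun i => (N i : ℝ≥0∞) * μ {ω | a * ρ ^ i ≤ Z ω}

theorem Real.exp_le_iff_rpow_le_rpow_max_log {y s r : ℝ} (hy : 0 ≤ y) (hs : 0 < s) (hr : 0 < r) :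
    Real.exp s ≤ y ↔ s ^ r ≤ max (Real.log y) 0 ^ r := by
  rw [Real.rpow_le_rpow_iff hs.le (le_max_right _ _) hr, le_max_iff, or_iff_left hs.not_ge]
  rcases hy.eq_or_lt with rfl | hy
  · simp [(Real.exp_pos s).not_ge, hs.not_ge]
  · exact (Real.le_log_iff_exp_le hy).symm

theorem ProbabilityTheory.iIndepFun.iIndepSet_preimage {Ω ι β : Type*} [MeasurableSpace Ω]
    [MeasurableSpace β] {μ : Measure Ω} {f : ι → Ω → β} (hf : iIndepFun f μ)
    (hfm : ∀ i, Measurable (f i)) {B : ι → Set β} (hB : ∀ i, MeasurableSet (B i)) :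
    iIndepSet (fun i => f i ⁻¹' B i) μ := by
  rw [iIndepSet_iff_meas_biInter fun i => hfm i (hB i)]
  exact fun S => hf.measure_inter_preimage_eq_mul S fun i _ => hB i

theorem ProbabilityTheory.measure_frequently_cofinite_eq_one {Ω ι : Type*} [MeasurableSpace Ω]
    [Countable ι] {μ : Measure Ω} {s : ι → Set Ω} (hsm : ∀ i, MeasurableSet (s i))
    (hs : iIndepSet s μ) (hs' : ∑' i, μ (s i) = ∞) :
    μ {ω | ∃ᶠ i in cofinite, ω ∈ s i} = 1 := by
  have := hs.isProbabilityMeasure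
  cases finite_or_infinite ι
  · have := Fintype.ofFinite ι
    rw [tsum_fintype] at hs'
    exact absurd hs' (ENNReal.sum_ne_top.2 fun i _ => measure_ne_top μ _)
  · obtain ⟨_⟩ := nonempty_denumerable ι
    let e : ℕ ≃ ι := (Denumerable.eqv ι).symm
    have hBC := measure_limsup_eq_one (s := s ∘ e) (fun n => hsm _) (hs.precomp e.injective)
      (by rwa [Function.comp_def, e.tsum_eq fun i => μ (s i)])
    refine le_antisymm prob_le_one (hBC ▸ measure_mono fun ω hω => ?_)
    rw [mem_limsup_iff_frequently_mem, ← Nat.cofinite_eq_atTop] at hω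
    exact e.injective.tendsto_cofinite.frequently hω

theorem ProbabilityTheory.measure_frequently_exists_mem_eq_one {Ω ι J β : Type*}
    [MeasurableSpace Ω] [Countable ι] [MeasurableSpace β] {μ : Measure Ω}
    {Y : J → Ω → β} (hY : iIndepFun Y μ) (hYm : ∀ j, Measurable (Y j))
    {L : ι → Finset J} (hL : Pairwise (Disjoint on L)) {B : ι → Set β}
    (hB : ∀ i, MeasurableSet (B i)) (hsum : ∑' i, ∑ j ∈ L i, μ (Y j ⁻¹' B i) = ∞) :
    μ {ω | ∃ᶠ i in cofinite, ∃ j ∈ L i, Y j ω ∈ B i} = 1 := by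
  let g : (Σ i, L i) → J := fun k => k.2
  have hg : g.Injective := by
    rintro ⟨i, j, hj⟩ ⟨i', j', hj'⟩ (rfl : j = j')
    obtain rfl : i = i' := by_contra fun h => Finset.disjoint_left.mp (hL h) hj hj'
    rfl
  have hfst : Tendsto (Sigma.fst : (Σ i, L i) → ι) cofinite cofinite :=
    Tendsto.cofinite_of_finite_preimage_singleton fun i =>
      ((Set.finite_range (Sigma.mk i)).subset (by rintro ⟨_, x⟩ rfl; exact ⟨x, rfl⟩)).to_subtype
  have hBC := measure_frequently_cofinite_eq_one (s := fun k => Y (g k) ⁻¹' B k.1)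
    (fun k => hYm _ (hB _)) ((hY.precomp hg).iIndepSet_preimage (fun k => hYm _) fun k => hB k.1)
    (by rwa [ENNReal.tsum_sigma',
      tsum_congr fun i => Finset.tsum_subtype (L i) fun j => μ (Y j ⁻¹' B i)])
  have := hY.isProbabilityMeasure
  refine le_antisymm prob_le_one (hBC ▸ measure_mono fun ω hω => ?_)
  exact hfst.frequently_map _ (fun k hk => ⟨k.2, k.2.2, hk⟩) hω

theorem stmt6_general
    {Ω : Type*} [MeasurableSpace Ω] (P : Measure Ω) [IsProbabilityMeasure P]
    {J : Type*}
    (Y : J → Ω → ℝ)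
    (hYmeas : ∀ j, Measurable (Y j))
    (hYnonneg : ∀ j ω, 0 ≤ Y j ω)
    (hYindep : ProbabilityTheory.iIndepFun Y P)
    (hYident : ∀ j j', ProbabilityTheory.IdentDistrib (Y j) (Y j') P P)
    (r : ℝ) (hr : 0 < r)
    (hinf : ∀ j, ∫⁻ ω, ENNReal.ofReal ((max (Real.log (Y j ω)) 0) ^ r) ∂P = ⊤)
    (c₂ c₃ β : ℝ) (hc₂ : 0 < c₂) (hc₃ : 0 < c₃) (hβ : 1 < β)
    (L : ℕ → Finset J)
    (hL_disj : ∀ i i', i ≠ i' → Disjoint (L i) (L i'))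
    (hL_card : ∀ i : ℕ, 1 ≤ i → c₂ * β ^ (c₃ * (i : ℝ)) ≤ ((L i).card : ℝ))
    (M : ℕ → Ω → ℝ)
    (hM : ∀ i, 1 ≤ i → ∀ ω, IsGreatest ((fun j => Y j ω) '' (L i : Set J)) (M i ω))
    (c : ℝ) (hc : 0 < c) :
    P {ω | ∃ᶠ (i : ℕ) in atTop,
        Real.exp (c * β ^ (c₃ * (i : ℝ) / r)) ≤ M i ω} = 1 := by
  have hβ0 : 0 < β := zero_lt_one.trans hβ
  have hthreshold : ∀ i : ℕ, (c * β ^ (c₃ * i / r)) ^ r = c ^ r * (β ^ c₃) ^ i := fun i => by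
    rw [Real.mul_rpow hc.le (by positivity), ← Real.rpow_mul hβ0.le, div_mul_cancel₀ _ hr.ne',
      Real.rpow_mul hβ0.le, Real.rpow_natCast]
  have hcard : ∀ i : ℕ, 1 ≤ i → c₂ * (β ^ c₃) ^ i ≤ (L i).card := fun i hi => by
    simpa only [Real.rpow_mul hβ0.le, Real.rpow_natCast] using hL_card i hi
  obtain ⟨j₀, -⟩ : (L 1).Nonempty := Finset.card_pos.1 <| by
    exact_mod_cast (by positivity : 0 < c₂ * (β ^ c₃) ^ 1).trans_le (hcard 1 le_rfl)
  set Z : Ω → ℝ := fun ω => max (Real.log (Y j₀ ω)) 0 ^ r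
  have hq : ∀ j (i : ℕ), P (Y j ⁻¹' Set.Ici (Real.exp (c * β ^ (c₃ * i / r)))) =
      P {ω | c ^ r * (β ^ c₃) ^ i ≤ Z ω} := fun j i => by
    rw [(hYident j j₀).measure_mem_eq measurableSet_Ici, ← hthreshold]
    congr 1
    ext ω
    exact Real.exp_le_iff_rpow_le_rpow_max_log (hYnonneg j₀ ω) (by positivity) hr
  have hsum : ∑' i : ℕ, ∑ j ∈ L i, P (Y j ⁻¹' Set.Ici (Real.exp (c * β ^ (c₃ * i / r)))) = ∞ := by
    simp_rw [hq, Finset.sum_const, nsmul_eq_mul]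
    exact tsum_natCast_mul_measure_le_eq_top_of_lintegral_eq_top
      (((hYmeas j₀).log.max measurable_const).pow_const r) (hinf j₀) (by positivity)
      (Real.one_lt_rpow hβ hc₃) hc₂ hcard
  have hfreq := measure_frequently_exists_mem_eq_one hYindep hYmeas hL_disj
    (fun _ => measurableSet_Ici) hsum
  refine le_antisymm prob_le_one (hfreq ▸ measure_mono fun ω hω => ?_)
  rw [Nat.cofinite_eq_atTop] at hω
  exact (hω.and_eventually (eventually_ge_atTop 1)).mono
    fun i ⟨⟨j, hj, hYj⟩, hi⟩ => hYj.trans ((hM i hi ω).2 ⟨j, hj, rfl⟩)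

/-- Lemma `ml`.
Let `r > 0`, `J` a countably infinite index set, `(Y j)_{j ∈ J}` i.i.d. nonnegative real
random variables with `E[(log⁺ Y j)^r] = ∞`, and `(L i)` pairwise disjoint finite subsets of
`J` with `|L i| ≥ c₂ β^{c₃ i}` for constants `c₂, c₃ > 0`, `β > 1`.  With
`M i := max_{j ∈ L i} Y j`, for every `c > 0` we have
`P(M i ≥ exp (c β^{c₃ i / r}) for infinitely many i) = 1`. -/
theorem stmt6
    {Ω : Type*} [MeasurableSpace Ω] (P : Measure Ω) [IsProbabilityMeasure P]
    {J : Type*} [Countable J] [Infinite J]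
    (Y : J → Ω → ℝ)
    (hYmeas : ∀ j, Measurable (Y j))
    (hYnonneg : ∀ j ω, 0 ≤ Y j ω)
    (hYindep : ProbabilityTheory.iIndepFun Y P)
    (hYident : ∀ j j', ProbabilityTheory.IdentDistrib (Y j) (Y j') P P)
    (r : ℝ) (hr : 0 < r)
    (hinf : ∀ j, ∫⁻ ω, ENNReal.ofReal ((max (Real.log (Y j ω)) 0) ^ r) ∂P = ⊤)
    (c₂ c₃ β : ℝ) (hc₂ : 0 < c₂) (hc₃ : 0 < c₃) (hβ : 1 < β)
    (L : ℕ → Finset J)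
    (hL_disj : ∀ i i', i ≠ i' → Disjoint (L i) (L i'))
    (hL_card : ∀ i : ℕ, 1 ≤ i → c₂ * β ^ (c₃ * (i : ℝ)) ≤ ((L i).card : ℝ))
    (M : ℕ → Ω → ℝ)
    (hM : ∀ i, 1 ≤ i → ∀ ω, IsGreatest ((fun j => Y j ω) '' (L i : Set J)) (M i ω))
    (c : ℝ) (hc : 0 < c) :
    P {ω | ∃ᶠ (i : ℕ) in atTop,
        Real.exp (c * β ^ (c₃ * (i : ℝ) / r)) ≤ M i ω} = 1 :=
  stmt6_general P Y hYmeas hYnonneg hYindep hYident r hr hinf c₂ c₃ β hc₂ hc₃ hβ L hL_disj hL_card M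
    hM c hc
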